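/- Let N : ℝ^d → ℝ be a norm, L > 0, and let C° : ℝ^d × ℝ → ℝ be such that: (i) for every v ∈ ℝ, the map q ↦ C°(q, v) is increasing, 1-invariant, convex, differentiable, and L-smooth with respect to N; and (ii) for every q ∈ ℝ^d, the map v ↦ C°(q, v) is nondecreasing. Let g : ℝ^d → ℝ satisfy g(r) ≥ 0 for all r. Fix q_0 ∈ ℝ^d, v_0 ∈ ℝ, and bundles r_0, …, r_T ∈ ℝ^d, and set q_{t+1} = q_t + r_t and v_{t+1} = v_t + g(r_t). Define the volume-parameterized smooth quadratic payment Pay_{L°}(q_t, r_t; v_t) = ⟨∇_q C°(q_t, v_{t+1}), r_t⟩ + (L/2) N(r_t)² + (C°(q_t, v_{t+1}) − C°(q_t, v_t)). Then there exists an index i ∈ {1, …, d} such that ∑_{t=0}^{T} Pay_{L°}(q_t, r_t; v_t) ≥ (q_{T+1} − q_0)_i; i.e., the volume-parameterized Smooth Quadratic Prediction Market satisfies no arbitrage over the whole trade history. -/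

import Mathlib

/-!
Along the history the potential `C°(q_t, v_t)` increases in each round by at most the payment:
smoothness bounds `C°(q_{t+1}, v_{t+1}) - C°(q_t, v_{t+1})` by the quadratic part, and the
liquidity fee is exactly `C°(q_t, v_{t+1}) - C°(q_t, v_t)`. So the total payment is at least
`C°(q_{T+1}, v_{T+1}) - C°(q_0, v_0) ≥ C°(q_{T+1}, v_0) - C°(q_0, v_0)`, since the volume only
grows. Finally, if `i` minimises `(q_{T+1} - q_0)_i = α`, then `q_{T+1} ≥ q_0 + α𝟙`
componentwise, and monotonicity with 1-invariance give `C°(q_{T+1}, v_0) ≥ C°(q_0, v_0) + α`.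
-/

open scoped RealInnerProductSpace

/-- The all-ones vector `𝟙` in `ℝ^d`. -/
noncomputable def allOnes (d : ℕ) : EuclideanSpace ℝ (Fin d) :=
  (EuclideanSpace.equiv (Fin d) ℝ).symm (fun _ => 1)

@[simp]
theorem allOnes_apply (d : ℕ) (i : Fin d) : allOnes d i = 1 := rfl

theorem sub_le_sum_range_of_sub_le {M : Type*} [AddCommGroup M] [PartialOrder M]
    [IsOrderedAddMonoid M] {Φ p : ℕ → M} (h : ∀ t, Φ (t + 1) - Φ t ≤ p t) (n : ℕ) :
    Φ n - Φ 0 ≤ ∑ t ∈ Finset.range n, p t := by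
  rw [← Finset.sum_range_sub]
  exact Finset.sum_le_sum fun t _ => h t

section OneInvariant

variable {d : ℕ} {f : EuclideanSpace ℝ (Fin d) → ℝ}

theorem add_le_of_le_sub_apply (hmono : ∀ q q', (∀ i, q' i ≤ q i) → f q' ≤ f q)
    (hinv : ∀ q (α : ℝ), f (q + α • allOnes d) = f q + α) {q q' : EuclideanSpace ℝ (Fin d)}
    {α : ℝ} (hα : ∀ i, α ≤ (q' - q) i) : f q + α ≤ f q' := by
  rw [← hinv]
  refine hmono _ _ fun i => ?_
  have := hα i
  simp only [PiLp.add_apply, PiLp.smul_apply, PiLp.sub_apply, allOnes_apply, smul_eq_mul,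
    mul_one] at this ⊢
  linarith

theorem exists_sub_apply_le_sub (hmono : ∀ q q', (∀ i, q' i ≤ q i) → f q' ≤ f q)
    (hinv : ∀ q (α : ℝ), f (q + α • allOnes d) = f q + α) (q q' : EuclideanSpace ℝ (Fin d)) :
    ∃ i, (q' - q) i ≤ f q' - f q := by
  rcases isEmpty_or_nonempty (Fin d) with hd | hd
  · -- with no coordinates `𝟙 = 0`, so 1-invariance reads `f q = f q + 1`
    have h := hinv q 1
    rw [Subsingleton.elim (q + (1 : ℝ) • allOnes d) q] at h
    linarith
  · obtain ⟨i, hi⟩ := Finite.exists_min fun j => (q' - q) j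
    exact ⟨i, le_sub_iff_add_le'.mpr (add_le_of_le_sub_apply hmono hinv hi)⟩

end OneInvariant

theorem vpm_smooth_quadratic_no_arbitrage_general
    (d : ℕ) (N : EuclideanSpace ℝ (Fin d) → ℝ)
    (L : ℝ)
    (Cc : EuclideanSpace ℝ (Fin d) → ℝ → ℝ)
    (hCincr : ∀ (v : ℝ) (q q' : EuclideanSpace ℝ (Fin d)),
      (∀ i, q' i ≤ q i) → q ≠ q' → Cc q' v < Cc q v)
    (hCinv : ∀ (v : ℝ) (q : EuclideanSpace ℝ (Fin d)) (α : ℝ),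
      Cc (q + α • allOnes d) v = Cc q v + α)
    (hCsmooth : ∀ (v : ℝ) (x y : EuclideanSpace ℝ (Fin d)),
      Cc x v - Cc y v - ⟪gradient (fun z => Cc z v) y, x - y⟫ ≤ L / 2 * N (x - y) ^ 2)
    (hCmono : ∀ q : EuclideanSpace ℝ (Fin d), Monotone (fun v => Cc q v))
    (g : EuclideanSpace ℝ (Fin d) → ℝ) (hg : ∀ r, 0 ≤ g r)
    (T : ℕ) (r : ℕ → EuclideanSpace ℝ (Fin d))
    (q : ℕ → EuclideanSpace ℝ (Fin d)) (v : ℕ → ℝ)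
    (hq : ∀ t, q (t + 1) = q t + r t)
    (hv : ∀ t, v (t + 1) = v t + g (r t)) :
    ∃ i : Fin d,
      ∑ t ∈ Finset.range (T + 1),
        (⟪gradient (fun z => Cc z (v (t + 1))) (q t), r t⟫ + L / 2 * N (r t) ^ 2 +
          (Cc (q t) (v (t + 1)) - Cc (q t) (v t))) ≥
        (q (T + 1) - q 0) i := by
  have hCle : ∀ v q q', (∀ i, q' i ≤ q i) → Cc q' v ≤ Cc q v := fun v q q' h => by
    rcases eq_or_ne q q' with rfl | hne
    exacts [le_rfl, (hCincr v q q' h hne).le]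
  have hv_mono : Monotone v :=
    monotone_nat_of_le_succ fun t => by rw [hv t]; linarith [hg (r t)]
  have hstep : ∀ t, Cc (q (t + 1)) (v (t + 1)) - Cc (q t) (v t) ≤
      ⟪gradient (fun z => Cc z (v (t + 1))) (q t), r t⟫ + L / 2 * N (r t) ^ 2 +
        (Cc (q t) (v (t + 1)) - Cc (q t) (v t)) := fun t => by
    have h := hCsmooth (v (t + 1)) (q (t + 1)) (q t)
    rw [hq t, add_sub_cancel_left] at h
    rw [hq t]
    linarith
  obtain ⟨i, hi⟩ := exists_sub_apply_le_sub (hCle (v 0)) (hCinv (v 0)) (q 0) (q (T + 1))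
  have htotal := sub_le_sum_range_of_sub_le (Φ := fun t => Cc (q t) (v t)) hstep (T + 1)
  have hvolume := hCmono (q (T + 1)) (hv_mono (Nat.zero_le (T + 1)))
  exact ⟨i, by linarith⟩

/-- the volume-parameterized Smooth Quadratic Prediction Market, with
payment `Pay_{L°}(q_t, r_t; v_t) = ⟪∇_q C°(q_t, v_{t+1}), r_t⟫ + (L/2) N(r_t)² +
(C°(q_t, v_{t+1}) − C°(q_t, v_t))`, satisfies no arbitrage over the whole trade
history: there is an outcome `i` with `∑_{t=0}^{T} Pay ≥ (q_{T+1} − q_0)_i`. -/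
theorem vpm_smooth_quadratic_no_arbitrage
    (d : ℕ) (N : EuclideanSpace ℝ (Fin d) → ℝ)
    (hN_nonneg : ∀ x, 0 ≤ N x)
    (hN_eq_zero : ∀ x, N x = 0 ↔ x = 0)
    (hN_smul : ∀ (a : ℝ) x, N (a • x) = |a| * N x)
    (hN_add : ∀ x y, N (x + y) ≤ N x + N y)
    (L : ℝ) (hL : 0 < L)
    (Cc : EuclideanSpace ℝ (Fin d) → ℝ → ℝ)
    (hCincr : ∀ (v : ℝ) (q q' : EuclideanSpace ℝ (Fin d)),
      (∀ i, q' i ≤ q i) → q ≠ q' → Cc q' v < Cc q v)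
    (hCinv : ∀ (v : ℝ) (q : EuclideanSpace ℝ (Fin d)) (α : ℝ),
      Cc (q + α • allOnes d) v = Cc q v + α)
    (hCconv : ∀ v : ℝ, ConvexOn ℝ Set.univ (fun q => Cc q v))
    (hCdiff : ∀ v : ℝ, Differentiable ℝ (fun q => Cc q v))
    (hCsmooth : ∀ (v : ℝ) (x y : EuclideanSpace ℝ (Fin d)),
      Cc x v - Cc y v - ⟪gradient (fun z => Cc z v) y, x - y⟫ ≤ L / 2 * N (x - y) ^ 2)
    (hCmono : ∀ q : EuclideanSpace ℝ (Fin d), Monotone (fun v => Cc q v))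
    (g : EuclideanSpace ℝ (Fin d) → ℝ) (hg : ∀ r, 0 ≤ g r)
    (T : ℕ) (r : ℕ → EuclideanSpace ℝ (Fin d))
    (q : ℕ → EuclideanSpace ℝ (Fin d)) (v : ℕ → ℝ)
    (hq : ∀ t, q (t + 1) = q t + r t)
    (hv : ∀ t, v (t + 1) = v t + g (r t)) :
    ∃ i : Fin d,
      ∑ t ∈ Finset.range (T + 1),
        (⟪gradient (fun z => Cc z (v (t + 1))) (q t), r t⟫ + L / 2 * N (r t) ^ 2 +
          (Cc (q t) (v (t + 1)) - Cc (q t) (v t))) ≥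
        (q (T + 1) - q 0) i :=
  vpm_smooth_quadratic_no_arbitrage_general d N L Cc hCincr hCinv hCsmooth hCmono g hg T r q v hq hv
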